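/- Let I ⊆ ℝ be an open interval, let u : I → ℂ be a smooth nowhere-vanishing function, and let s₁, α₄ ∈ ℝ. Set ν = |u|², μ = −(i/4)·u′/u + (s₁+ν)/2, f(x;λ) = −iλ⁴ + (i/2)(s₁+ν(x))λ² + iα₄ and g(x;λ) = u(x)·λ·(λ² − μ(x)). If ∂ₓg(x;λ) = −4λ·u(x)·f(x;λ) − 4iλ²·g(x;λ) for all x ∈ I and all λ ∈ ℂ, then μ′(x) = 4·(−i·μ(x)² + (i/2)(s₁+ν(x))·μ(x) + iα₄) for all x ∈ I. -/

import Mathlib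

/-- The squared modulus `ν = |u|²`. -/
noncomputable def nuF (u : ℝ → ℂ) (x : ℝ) : ℝ := Complex.normSq (u x)

/-- The auxiliary spectrum `μ = −(i/4) u′/u + (s₁ + ν)/2`. -/
noncomputable def muF (u : ℝ → ℂ) (s₁ : ℝ) (x : ℝ) : ℂ :=
  -(Complex.I / 4) * (deriv u x / u x) + ((s₁ : ℂ) + (nuF u x : ℂ)) / 2

/-- The function `f(x;λ) = −iλ⁴ + (i/2)(s₁+ν)λ² + iα₄`. -/
noncomputable def fF (u : ℝ → ℂ) (s₁ α₄ : ℝ) (x : ℝ) (l : ℂ) : ℂ :=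
  -Complex.I * l ^ 4 + (Complex.I / 2) * ((s₁ : ℂ) + (nuF u x : ℂ)) * l ^ 2
    + Complex.I * (α₄ : ℂ)

/-- The function `g(x;λ) = u λ (λ² − μ)`. -/
noncomputable def gF (u : ℝ → ℂ) (s₁ : ℝ) (x : ℝ) (l : ℂ) : ℂ :=
  u x * l * (l ^ 2 - muF u s₁ x)

/-- If `∂ₓg = −4λuf − 4iλ²g` on an open interval for every `λ`, then
`μ′ = 4(−iμ² + (i/2)(s₁+ν)μ + iα₄)`. -/
theorem mu_x_eq (a b : ℝ) (u : ℝ → ℂ) (hu : ContDiffOn ℝ (⊤ : ℕ∞) u (Set.Ioo a b))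
    (hu0 : ∀ x ∈ Set.Ioo a b, u x ≠ 0) (s₁ α₄ : ℝ)
    (hg : ∀ x ∈ Set.Ioo a b, ∀ l : ℂ,
      deriv (fun y => gF u s₁ y l) x
        = -4 * l * u x * fF u s₁ α₄ x l - 4 * Complex.I * l ^ 2 * gF u s₁ x l) :
    ∀ x ∈ Set.Ioo a b,
      deriv (muF u s₁) x
        = 4 * (-Complex.I * (muF u s₁ x) ^ 2
            + (Complex.I / 2) * ((s₁ : ℂ) + (nuF u x : ℂ)) * muF u s₁ x
            + Complex.I * (α₄ : ℂ)) := by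
  intro x hx
  have hopen : IsOpen (Set.Ioo a b) := isOpen_Ioo
  have hux : u x ≠ 0 := hu0 x hx
  -- differentiability of u at x
  have hud : DifferentiableAt ℝ u x := by
    have := (hu.differentiableOn (by norm_num)).differentiableAt
      (hopen.mem_nhds hx)
    exact this
  -- differentiability of deriv u at x
  have hu'd : DifferentiableAt ℝ (deriv u) x := by
    have h1 : ContDiffOn ℝ (⊤ : ℕ∞) (deriv u) (Set.Ioo a b) :=
      hu.deriv_of_isOpen hopen (by simp)
    exact (h1.differentiableOn (by norm_num)).differentiableAt (hopen.mem_nhds hx)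
  -- differentiability of ν (coerced to ℂ)
  have hνd : DifferentiableAt ℝ (fun y => ((nuF u y : ℝ) : ℂ)) x := by
    have heq : (fun y => ((nuF u y : ℝ) : ℂ))
        = fun y => u y * (starRingEnd ℂ) (u y) := by
      funext y
      rw [Complex.mul_conj]
      rfl
    rw [heq]
    exact hud.mul hud.star
  -- differentiability of μ at x
  have hμd : DifferentiableAt ℝ (muF u s₁) x := by
    unfold muF
    exact (((hu'd.div hud hux).const_mul _).add
      (((differentiableAt_const _).add hνd).div_const 2))
  set μ' := deriv (muF u s₁) x with hμ'
  -- compute ∂ₓ g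
  have key : ∀ l : ℂ, deriv u x * l * (l ^ 2 - muF u s₁ x) + u x * l * (-μ')
      = -4 * l * u x * fF u s₁ α₄ x l - 4 * Complex.I * l ^ 2 * gF u s₁ x l := by
    intro l
    have h1 : HasDerivAt (fun y => u y * l) (deriv u x * l) x :=
      hud.hasDerivAt.mul_const l
    have h2 : HasDerivAt (fun y => l ^ 2 - muF u s₁ y) (-μ') x :=
      hμd.hasDerivAt.const_sub (l ^ 2)
    have h3 := h1.mul h2
    have h4 : deriv (fun y => gF u s₁ y l) x
        = deriv u x * l * (l ^ 2 - muF u s₁ x) + u x * l * (-μ') := by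
      have := h3.deriv
      simpa [gF, Pi.mul_def] using this
    rw [← h4]
    exact hg x hx l
  have E1 := key 1
  have E2 := key 2
  -- cancel u x
  have hmain : u x * μ' = u x * (4 * (-Complex.I * (muF u s₁ x) ^ 2
      + (Complex.I / 2) * ((s₁ : ℂ) + (nuF u x : ℂ)) * muF u s₁ x
      + Complex.I * (α₄ : ℂ))) := by
    simp only [fF, gF, muF] at E1 E2 ⊢
    set ν : ℂ := ((nuF u x : ℝ) : ℂ)
    set w : ℂ := deriv u x
    set v : ℂ := u x
    linear_combination (-(4:ℂ)/3 + (-(Complex.I / 4) * (w / v) + ((s₁:ℂ) + ν)/2)/3) * E1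
      + ((1:ℂ)/6 - (-(Complex.I / 4) * (w / v) + ((s₁:ℂ) + ν)/2)/6) * E2
  exact mul_left_cancel₀ hux hmain
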